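/- Let A be a finite nonempty set with U, F : A → ℝ, and let S(η) ⊆ A denote the set of maximizers of U + η·F for η ≥ 0. If 0 ≤ η < η' and S(η) ∩ S(η') ≠ ∅, then for every a ∈ S(η) and a' ∈ S(η'), F(a') ≥ F(a) and U(a) ≥ U(a'). -/

import Mathlib

/-!
Adding the optimality inequalities of `a` at weight `η` (tested against `a'`) and of `a'` at
weight `η'` (tested against `a`) cancels the utilities and leaves `(η' - η) (F a' - F a) ≥ 0`,
so `F a ≤ F a'`. Optimality of `a` at `η` then gives `U a - U a' ≥ η (F a' - F a) ≥ 0`.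
-/

section WeightedMaximizers

variable {α R : Type*} [CommRing R] [LinearOrder R] [IsStrictOrderedRing R]
  {U F : α → R} {η η' : R} {a a' : α}

theorem fairness_le_of_maximizers_of_lt (hηη' : η < η')
    (ha : ∀ b, U b + η * F b ≤ U a + η * F a)
    (ha' : ∀ b, U b + η' * F b ≤ U a' + η' * F a') : F a ≤ F a' := by
  have key : 0 ≤ (η' - η) * (F a' - F a) := by linear_combination ha a' + ha' a
  exact sub_nonneg.1 ((mul_nonneg_iff_of_pos_left (sub_pos.2 hηη')).1 key)

theorem utility_le_of_maximizers_of_lt (hη : 0 ≤ η) (hηη' : η < η')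
    (ha : ∀ b, U b + η * F b ≤ U a + η * F a)
    (ha' : ∀ b, U b + η' * F b ≤ U a' + η' * F a') : U a' ≤ U a := by
  have hF := sub_nonneg.2 (fairness_le_of_maximizers_of_lt hηη' ha ha')
  linear_combination ha a' + mul_nonneg hη hF

end WeightedMaximizers

theorem decaf_monotone_pareto_traversal_general
    {A : Type*} (U F : A → ℝ) (η η' : ℝ)
    (hη : 0 ≤ η) (hηη' : η < η') :
    ∀ a a' : A,
      (∀ b : A, U b + η * F b ≤ U a + η * F a) →
      (∀ b : A, U b + η' * F b ≤ U a' + η' * F a') →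
      F a' ≥ F a ∧ U a ≥ U a' :=
  fun _ _ ha ha' =>
    ⟨fairness_le_of_maximizers_of_lt hηη' ha ha', utility_le_of_maximizers_of_lt hη hηη' ha ha'⟩

/-- Monotone trade-off along increasing fairness weights: for η < η' with
overlapping maximizer sets, any maximizer at η' has fairness at least that of
any maximizer at η, and utility at most that of any maximizer at η. -/
theorem decaf_monotone_pareto_traversal
    {A : Type*} [Fintype A] [Nonempty A] (U F : A → ℝ) (η η' : ℝ)
    (hη : 0 ≤ η) (hηη' : η < η')
    (hinter : ∃ c : A,
      (∀ b : A, U b + η * F b ≤ U c + η * F c) ∧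
      (∀ b : A, U b + η' * F b ≤ U c + η' * F c)) :
    ∀ a a' : A,
      (∀ b : A, U b + η * F b ≤ U a + η * F a) →
      (∀ b : A, U b + η' * F b ≤ U a' + η' * F a') →
      F a' ≥ F a ∧ U a ≥ U a' :=
  decaf_monotone_pareto_traversal_general U F η η' hη hηη'
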